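/- Let 𝒜 be a nonempty finite alphabet and let ω be a Toeplitz sequence over 𝒜 with EP(ω) = {2^k : k ≥ 1}. Then there exist a countable set Ω₁ ⊆ Z(ω,σ) and a continuous surjection f : Z(ω,σ) → ℤ₂ such that: (1) f(σx) = f(x) + 1 for every x ∈ Z(ω,σ); (2) the complement Z(ω,σ) \ Ω₁ is invariant under σ; and (3) the restriction of f to Z(ω,σ) \ Ω₁ is injective. In particular, the subshift σ|_{Z(ω,σ)} is, up to a countable set, continuously conjugated to the binary odometer. -/

import Mathlib

/-- The one-sided shift on sequences.  Sequences are 0-indexed here: index `n`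
stands for position `n+1` of the paper's sequences `{1,2,3,…} → 𝒜`. -/
def shift {𝒜 : Type*} (x : ℕ → 𝒜) : ℕ → 𝒜 := fun n => x (n + 1)

/-- `Z(ω,σ)`: the closure of the forward shift-orbit of `ω`. -/
def orbitClosure {𝒜 : Type*} [TopologicalSpace 𝒜] (ω : ℕ → 𝒜) : Set (ℕ → 𝒜) :=
  closure {y | ∃ n : ℕ, shift^[n] ω = y}

/-- A sequence is Toeplitz if every position is periodically repeated. -/
def IsToeplitz {𝒜 : Type*} (x : ℕ → 𝒜) : Prop :=
  ∀ n : ℕ, ∃ p : ℕ, 0 < p ∧ ∀ k : ℕ, 0 < k → x (n + k * p) = x n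

/-- `p ≥ 1` is an essential partial period of `x` if there is a position `m` with
`x(m+kp) = x(m)` for all `k ≥ 1`, while for every `1 ≤ p' < p` some `k ≥ 1` has
`x(m+kp') ≠ x(m)`. -/
def EP {𝒜 : Type*} (x : ℕ → 𝒜) : Set ℕ :=
  {p | 0 < p ∧ ∃ m : ℕ, (∀ k : ℕ, 0 < k → x (m + k * p) = x m) ∧
    ∀ p' : ℕ, 0 < p' → p' < p → ∃ k : ℕ, 0 < k ∧ x (m + k * p') ≠ x m}

/-!
Every position of `ω` has a period `2 ^ j`, and for each `K` exactly one residue class mod `2 ^ K`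
(the hole) consists of positions without period `2 ^ K`: of the two lifts mod `2 ^ (K + 1)` of the
hole mod `2 ^ K`, one contains a position of essential period `2 ^ (K + 1)`.

The closure of `{(σᵐ ω, m)}` in `Z(ω,σ) × ℤ₂` is the graph of a map `Z(ω,σ) → ℤ₂`. Indeed `ω`
recurs in every `x ∈ Z(ω,σ)`, and a wrong residue of the 2-adic coordinate of `x` would force the
hole class of `ω` to be periodic. Compactness of `ℤ₂` makes this map continuous, compactness of
`Z(ω,σ)` makes it onto. Off the hole, the symbols of `x` are determined by its 2-adic coordinate,
so the map is injective except at the points having some position in the hole at every level; for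
each such position there are at most `|𝒜|` of them.
-/

open Set PiNat PadicInt

section

variable {𝒜 : Type*}

def IsPeriodicAt (x : ℕ → 𝒜) (p n : ℕ) : Prop :=
  ∀ k, x (n + k * p) = x n

theorem isPeriodicAt_iff_forall_pos {x : ℕ → 𝒜} {p n : ℕ} :
    IsPeriodicAt x p n ↔ ∀ k, 0 < k → x (n + k * p) = x n := by
  refine ⟨fun h k _ => h k, fun h k => ?_⟩
  rcases k.eq_zero_or_pos with rfl | hk
  · simp
  · exact h k hk

theorem IsPeriodicAt.of_dvd {x : ℕ → 𝒜} {p q n : ℕ} (h : IsPeriodicAt x p n)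
    (hpq : p ∣ q) : IsPeriodicAt x q n := by
  obtain ⟨c, rfl⟩ := hpq
  intro k
  rw [← mul_assoc, mul_comm k p, mul_assoc, mul_comm p, h]

namespace IsToeplitz

variable {x : ℕ → 𝒜} {p m n : ℕ}

theorem apply_eq_of_modEq (hx : IsToeplitz x) (hn : IsPeriodicAt x p n) (h : m ≡ n [MOD p]) :
    x m = x n := by
  rcases Nat.eq_zero_or_pos p with rfl | hp
  · rw [Nat.modEq_zero_iff.mp h]
  obtain ⟨q, hq, hm⟩ := hx m
  -- move `m` forward by a multiple of its own period until it lies beyond `n`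
  have hle : n ≤ m + (n + 1) * p * q := by nlinarith [Nat.mul_pos hp hq]
  have hmod : m + (n + 1) * p * q ≡ n [MOD p] := by
    simpa [Nat.ModEq, mul_right_comm _ p] using h
  obtain ⟨k, hk⟩ := (Nat.modEq_iff_dvd' hle).mp hmod.symm
  calc x m = x (m + (n + 1) * p * q) := (hm _ (by positivity)).symm
    _ = x (n + k * p) := by rw [mul_comm k, ← hk, Nat.add_sub_cancel' hle]
    _ = x n := hn k

theorem isPeriodicAt_of_modEq (hx : IsToeplitz x) (hn : IsPeriodicAt x p n)
    (h : m ≡ n [MOD p]) : IsPeriodicAt x p m := fun k => by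
  rw [hx.apply_eq_of_modEq hn h, hx.apply_eq_of_modEq hn ((h.add_right _).trans _)]
  simp [Nat.ModEq]

theorem exists_mem_EP_isPeriodicAt (hx : IsToeplitz x) (n : ℕ) :
    ∃ p ∈ EP x, IsPeriodicAt x p n := by
  classical
  obtain ⟨hpos, hper⟩ := Nat.find_spec (hx n)
  refine ⟨Nat.find (hx n), ⟨hpos, n, hper, fun p' hp' hlt => ?_⟩,
    isPeriodicAt_iff_forall_pos.mpr hper⟩
  by_contra! h
  exact (Nat.find_min' (hx n) ⟨hp', h⟩).not_gt hlt

end IsToeplitz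

theorem Nat.modEq_of_not_modEq_mul_two {P a b m : ℕ} (ha : a ≡ m [MOD P]) (hb : b ≡ m [MOD P])
    (ha' : ¬ a ≡ m [MOD P * 2]) (hb' : ¬ b ≡ m [MOD P * 2]) : a ≡ b [MOD P * 2] := by
  have lift : ∀ y, y % (P * 2) = y % P ∨ y % (P * 2) = y % P + P := fun y => by
    rcases Nat.mod_two_eq_zero_or_one (y / P) with h | h <;> simp [Nat.mod_mul, h]
  unfold Nat.ModEq at *
  rcases lift a with h₁ | h₁ <;> rcases lift b with h₂ | h₂ <;>
    rcases lift m with h₃ | h₃ <;> omega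

structure IsDyadicToeplitz (x : ℕ → 𝒜) : Prop where
  exists_isPeriodicAt : ∀ n, ∃ j, IsPeriodicAt x (2 ^ j) n
  exists_not_isPeriodicAt :
    ∀ K, ∃ m, IsPeriodicAt x (2 ^ (K + 1)) m ∧ ¬ IsPeriodicAt x (2 ^ K) m

theorem IsToeplitz.isDyadicToeplitz {x : ℕ → 𝒜} (hx : IsToeplitz x)
    (hEP : EP x = {p : ℕ | ∃ k : ℕ, 1 ≤ k ∧ p = 2 ^ k}) : IsDyadicToeplitz x where
  exists_isPeriodicAt n := by
    obtain ⟨p, hp, hper⟩ := hx.exists_mem_EP_isPeriodicAt n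
    rw [hEP] at hp
    obtain ⟨j, -, rfl⟩ := hp
    exact ⟨j, hper⟩
  exists_not_isPeriodicAt K := by
    have hK : 2 ^ (K + 1) ∈ EP x := by rw [hEP]; exact ⟨K + 1, by omega, rfl⟩
    obtain ⟨-, m, hper, hess⟩ := hK
    obtain ⟨k, hk, hne⟩ := hess (2 ^ K) (by positivity) (by gcongr <;> omega)
    exact ⟨m, isPeriodicAt_iff_forall_pos.mpr hper, fun h => hne (h k)⟩

namespace IsDyadicToeplitz

variable {x : ℕ → 𝒜} (hx : IsDyadicToeplitz x)
include hx

theorem isToeplitz : IsToeplitz x := fun n => by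
  obtain ⟨j, hj⟩ := hx.exists_isPeriodicAt n
  exact ⟨2 ^ j, by positivity, fun k _ => hj k⟩

theorem modEq_of_not_isPeriodicAt : ∀ {K a b : ℕ}, ¬ IsPeriodicAt x (2 ^ K) a →
    ¬ IsPeriodicAt x (2 ^ K) b → a ≡ b [MOD 2 ^ K]
  | 0, _, _, _, _ => Nat.modEq_one
  | K + 1, a, b, ha, hb => by
    -- `a`, `b` and the `2 ^ (K + 1)`-periodic `m` lie over one residue mod `2 ^ K`, which has
    -- only two lifts mod `2 ^ (K + 1)`
    obtain ⟨m, hm, hmK⟩ := hx.exists_not_isPeriodicAt K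
    have hdvd : 2 ^ K ∣ 2 ^ (K + 1) := pow_dvd_pow 2 K.le_succ
    have not_modEq_m {c} (hc : ¬ IsPeriodicAt x (2 ^ (K + 1)) c) : ¬ c ≡ m [MOD 2 ^ K * 2] :=
      fun h => hc (hx.isToeplitz.isPeriodicAt_of_modEq hm h)
    exact Nat.modEq_of_not_modEq_mul_two
      (modEq_of_not_isPeriodicAt (fun h => ha (h.of_dvd hdvd)) hmK)
      (modEq_of_not_isPeriodicAt (fun h => hb (h.of_dvd hdvd)) hmK)
      (not_modEq_m ha) (not_modEq_m hb)

noncomputable def hole (K : ℕ) : ZMod (2 ^ K) :=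
  (hx.exists_not_isPeriodicAt K).choose

theorem isPeriodicAt_iff_ne_hole {K n : ℕ} :
    IsPeriodicAt x (2 ^ K) n ↔ (n : ZMod (2 ^ K)) ≠ hx.hole K := by
  obtain ⟨-, hm⟩ := (hx.exists_not_isPeriodicAt K).choose_spec
  rw [hole, Ne, ZMod.natCast_eq_natCast_iff]
  exact ⟨fun hn h => hm (hx.isToeplitz.isPeriodicAt_of_modEq hn h.symm),
    fun h => by_contra fun hn => h (hx.modEq_of_not_isPeriodicAt hn hm)⟩

theorem apply_eq_apply_val {K n : ℕ} (hn : (n : ZMod (2 ^ K)) ≠ hx.hole K) :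
    x n = x (n : ZMod (2 ^ K)).val := by
  rw [ZMod.val_natCast]
  exact (hx.isToeplitz.apply_eq_of_modEq ((hx.isPeriodicAt_iff_ne_hole).mpr hn)
    (Nat.mod_modEq n _)).symm

theorem exists_isPeriodicAt_of_lt (L : ℕ) : ∃ M, ∀ n < L, IsPeriodicAt x (2 ^ M) n := by
  choose j hj using hx.exists_isPeriodicAt
  exact ⟨(Finset.range L).sup j, fun n hn =>
    (hj n).of_dvd (pow_dvd_pow 2 (Finset.le_sup (Finset.mem_range.mpr hn)))⟩

end IsDyadicToeplitz

theorem shift_iterate_apply (x : ℕ → 𝒜) (m n : ℕ) : shift^[m] x n = x (n + m) := by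
  induction m generalizing x with
  | zero => rfl
  | succ m ih => rw [Function.iterate_succ_apply, ih]; rfl

def orbitResidueClass (x : ℕ → 𝒜) (N : ℕ) (c : ZMod N) : Set (ℕ → 𝒜) :=
  {y | ∃ m : ℕ, (m : ZMod N) = c ∧ shift^[m] x = y}

section Topology

variable [TopologicalSpace 𝒜]

theorem continuous_shift : Continuous (shift : (ℕ → 𝒜) → ℕ → 𝒜) :=
  continuous_pi fun n => continuous_apply (n + 1)

theorem shift_mem_orbitClosure {ω x : ℕ → 𝒜} (hx : x ∈ orbitClosure ω) :
    shift x ∈ orbitClosure ω :=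
  map_mem_closure continuous_shift hx <| by
    rintro _ ⟨m, rfl⟩
    exact ⟨m + 1, Function.iterate_succ_apply' _ _ _⟩

theorem closure_orbitResidueClass_subset {x : ℕ → 𝒜} {N : ℕ} {c : ZMod N} :
    closure (orbitResidueClass x N c) ⊆ orbitClosure x :=
  closure_mono fun _ ⟨m, _, hm⟩ => ⟨m, hm⟩

theorem exists_mem_closure_orbitResidueClass {x y : ℕ → 𝒜} (N : ℕ) [NeZero N]
    (hy : y ∈ orbitClosure x) : ∃ c, y ∈ closure (orbitResidueClass x N c) := by
  have hunion : {y | ∃ m : ℕ, shift^[m] x = y} = ⋃ c, orbitResidueClass x N c := by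
    ext y
    simp [orbitResidueClass]
  rwa [orbitClosure, hunion, closure_iUnion_of_finite, mem_iUnion] at hy

variable [DiscreteTopology 𝒜]

theorem mem_closure_iff_exists_mem_cylinder {s : Set (ℕ → 𝒜)} {x : ℕ → 𝒜} :
    x ∈ closure s ↔ ∀ L, ∃ y ∈ s, y ∈ cylinder x L := by
  rw [(isTopologicalBasis_cylinders fun _ : ℕ => 𝒜).mem_closure_iff]
  constructor
  · intro h L
    obtain ⟨y, hyx, hys⟩ := h _ ⟨x, L, rfl⟩ (self_mem_cylinder x L)
    exact ⟨y, hys, hyx⟩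
  · rintro h _ ⟨z, L, rfl⟩ hx
    obtain ⟨y, hys, hyx⟩ := h L
    rw [← mem_cylinder_iff_eq.mp hx]
    exact ⟨y, hyx, hys⟩

theorem apply_eq_of_mem_closure {s : Set (ℕ → 𝒜)} {x : ℕ → 𝒜} {n : ℕ} {a : 𝒜}
    (hx : x ∈ closure s) (hs : ∀ y ∈ s, y n = a) : x n = a := by
  obtain ⟨y, hys, hyx⟩ := mem_closure_iff_exists_mem_cylinder.mp hx (n + 1)
  rw [← hyx n n.lt_succ_self, hs y hys]

theorem IsDyadicToeplitz.mem_orbitClosure_of_mem {ω x : ℕ → 𝒜} (hω : IsDyadicToeplitz ω)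
    (hx : x ∈ orbitClosure ω) : ω ∈ orbitClosure x := by
  rw [orbitClosure, mem_closure_iff_exists_mem_cylinder] at hx ⊢
  intro L
  obtain ⟨M, hM⟩ := hω.exists_isPeriodicAt_of_lt L
  obtain ⟨_, ⟨m, rfl⟩, hm⟩ := hx (L + 2 ^ M)
  -- move on to the next position of `x` that sits at a multiple of `2 ^ M` in `ω`
  have hT := Nat.lt_mul_div_succ m (by positivity : 0 < 2 ^ M)
  have hT' : 2 ^ M * (m / 2 ^ M + 1) ≤ m + 2 ^ M := by
    rw [mul_add_one]; exact Nat.add_le_add_right (Nat.mul_div_le m _) _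
  refine ⟨shift^[2 ^ M * (m / 2 ^ M + 1) - m] x, ⟨_, rfl⟩, fun n hn => ?_⟩
  rw [shift_iterate_apply, ← hm _ (by omega), shift_iterate_apply,
    show n + (2 ^ M * (m / 2 ^ M + 1) - m) + m = n + (m / 2 ^ M + 1) * 2 ^ M by
      rw [mul_comm (m / 2 ^ M + 1)]; omega, hM n hn]

end Topology

theorem PadicInt.isOpen_setOf_toZModPow_eq {p : ℕ} [Fact p.Prime] (K : ℕ) (z : ℤ_[p]) :
    IsOpen {w : ℤ_[p] | toZModPow K w = toZModPow K z} := by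
  have hball : {w : ℤ_[p] | toZModPow K w = toZModPow K z} =
      Metric.closedBall z ((p : ℝ) ^ (-(K : ℤ))) := by
    ext w
    change _ = _ ↔ _
    rw [← sub_eq_zero, ← map_sub, ← RingHom.mem_ker, ker_toZModPow,
      ← norm_le_pow_iff_mem_span_pow, Metric.mem_closedBall, dist_eq_norm]
  rw [hball]
  exact IsUltrametricDist.isOpen_closedBall z
    (zpow_pos (Nat.cast_pos.mpr (Fact.out : p.Prime).pos) _).ne'

theorem continuousOn_of_isClosed_of_forall_mem_iff {X Y : Type*} [TopologicalSpace X]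
    [TopologicalSpace Y] [CompactSpace Y] {G : Set (X × Y)} (hG : IsClosed G) {s : Set X}
    {f : X → Y} (hf : ∀ x ∈ s, ∀ y, (x, y) ∈ G ↔ f x = y) : ContinuousOn f s := by
  refine continuousOn_iff_isClosed.mpr fun t ht =>
    ⟨Prod.fst '' (G ∩ univ ×ˢ t),
      isClosedMap_fst_of_compactSpace _ (hG.inter (isClosed_univ.prod ht)), ?_⟩
  ext x
  constructor
  · rintro ⟨hxt, hxs⟩
    exact ⟨⟨(x, f x), ⟨(hf x hxs _).mpr rfl, trivial, hxt⟩, rfl⟩, hxs⟩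
  · rintro ⟨⟨⟨x, y⟩, ⟨hxy, -, hy⟩, rfl⟩, hxs⟩
    exact ⟨((hf x hxs y).mp hxy).symm ▸ hy, hxs⟩

section PhaseGraph

variable [TopologicalSpace 𝒜] {ω x : ℕ → 𝒜}

def phaseGraph (ω : ℕ → 𝒜) : Set ((ℕ → 𝒜) × ℤ_[2]) :=
  closure (range fun m : ℕ => (shift^[m] ω, (m : ℤ_[2])))

theorem fst_mem_orbitClosure_of_mem_phaseGraph {z : ℤ_[2]} (h : (x, z) ∈ phaseGraph ω) :
    x ∈ orbitClosure ω :=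
  map_mem_closure continuous_fst h <| by
    rintro _ ⟨m, rfl⟩
    exact ⟨m, rfl⟩

theorem mem_closure_orbitResidueClass_of_mem_phaseGraph {z : ℤ_[2]} (h : (x, z) ∈ phaseGraph ω)
    (K : ℕ) : x ∈ closure (orbitResidueClass ω (2 ^ K) (toZModPow K z)) := by
  have hxz : (x, z) ∈ (univ ×ˢ {w | toZModPow K w = toZModPow K z}) ∩ phaseGraph ω :=
    ⟨⟨trivial, rfl⟩, h⟩
  have hU : IsOpen (univ ×ˢ {w | toZModPow K w = toZModPow K z}) :=
    (isOpen_univ (X := ℕ → 𝒜)).prod (isOpen_setOf_toZModPow_eq K z)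
  refine map_mem_closure continuous_fst (hU.inter_closure hxz) ?_
  rintro _ ⟨⟨-, hm⟩, m, rfl⟩
  exact ⟨m, by simpa using hm, rfl⟩

theorem exists_mem_phaseGraph (hx : x ∈ orbitClosure ω) : ∃ z, (x, z) ∈ phaseGraph ω := by
  have hsub : orbitClosure ω ⊆ Prod.fst '' phaseGraph ω := by
    refine closure_minimal ?_ (isClosedMap_fst_of_compactSpace _ isClosed_closure)
    rintro _ ⟨m, rfl⟩
    exact ⟨_, subset_closure ⟨m, rfl⟩, rfl⟩
  obtain ⟨⟨_, z⟩, hz, rfl⟩ := hsub hx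
  exact ⟨z, hz⟩

noncomputable def phase (ω x : ℕ → 𝒜) : ℤ_[2] :=
  Classical.epsilon fun z => (x, z) ∈ phaseGraph ω

theorem phase_mem_phaseGraph (hx : x ∈ orbitClosure ω) : (x, phase ω x) ∈ phaseGraph ω :=
  Classical.epsilon_spec (exists_mem_phaseGraph hx)

variable [DiscreteTopology 𝒜]

namespace IsDyadicToeplitz

variable (hω : IsDyadicToeplitz ω)
include hω

theorem apply_eq_of_mem_closure_orbitResidueClass {K n : ℕ} {c : ZMod (2 ^ K)}
    (hx : x ∈ closure (orbitResidueClass ω (2 ^ K) c))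
    (hn : (n : ZMod (2 ^ K)) + c ≠ hω.hole K) : x n = ω ((n : ZMod (2 ^ K)) + c).val := by
  refine apply_eq_of_mem_closure hx ?_
  rintro _ ⟨m, rfl, rfl⟩
  rw [shift_iterate_apply, hω.apply_eq_apply_val (by push_cast; exact hn)]
  push_cast
  rfl

theorem eq_neg_of_mem_closure_orbitResidueClass {K : ℕ} {c d : ZMod (2 ^ K)}
    (hx : x ∈ closure (orbitResidueClass ω (2 ^ K) c))
    (hωx : ω ∈ closure (orbitResidueClass x (2 ^ K) d)) : c = -d := by
  by_contra hne
  set h := (hω.hole K).val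
  have hshift : hω.hole K + (c + d) ≠ hω.hole K := by
    rwa [Ne, add_eq_left, add_eq_zero_iff_eq_neg]
  -- through `x`, the whole hole class of `ω` would copy a single position outside the hole
  have hconst (k : ℕ) : ω (h + k * 2 ^ K) = ω (hω.hole K + (c + d)).val := by
    refine apply_eq_of_mem_closure hωx ?_
    rintro _ ⟨q, rfl, rfl⟩
    have hpos : ((h + k * 2 ^ K + q : ℕ) : ZMod (2 ^ K)) + c = hω.hole K + (c + q) := by
      rw [Nat.cast_add, Nat.cast_add, Nat.cast_mul, ZMod.natCast_self, mul_zero, add_zero,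
        ZMod.natCast_zmod_val]
      ring
    rw [shift_iterate_apply,
      hω.apply_eq_of_mem_closure_orbitResidueClass hx (hpos ▸ hshift), hpos]
  have hper : IsPeriodicAt ω (2 ^ K) h := fun k => by
    rw [hconst, ← hconst 0, zero_mul, add_zero]
  exact hω.isPeriodicAt_iff_ne_hole.mp hper (by simp [h])

theorem eq_of_mem_closure_orbitResidueClass {K : ℕ} {c c' : ZMod (2 ^ K)}
    (hx : x ∈ closure (orbitResidueClass ω (2 ^ K) c))
    (hx' : x ∈ closure (orbitResidueClass ω (2 ^ K) c')) : c = c' := by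
  obtain ⟨d, hd⟩ := exists_mem_closure_orbitResidueClass (2 ^ K)
    (hω.mem_orbitClosure_of_mem (closure_orbitResidueClass_subset hx))
  rw [hω.eq_neg_of_mem_closure_orbitResidueClass hx hd,
    hω.eq_neg_of_mem_closure_orbitResidueClass hx' hd]

theorem eq_of_mem_phaseGraph {z z' : ℤ_[2]} (h : (x, z) ∈ phaseGraph ω)
    (h' : (x, z') ∈ phaseGraph ω) : z = z' :=
  ext_of_toZModPow.mp fun K => hω.eq_of_mem_closure_orbitResidueClass
    (mem_closure_orbitResidueClass_of_mem_phaseGraph h K)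
    (mem_closure_orbitResidueClass_of_mem_phaseGraph h' K)

theorem mem_phaseGraph_iff (hx : x ∈ orbitClosure ω) {z : ℤ_[2]} :
    (x, z) ∈ phaseGraph ω ↔ phase ω x = z :=
  ⟨hω.eq_of_mem_phaseGraph (phase_mem_phaseGraph hx), fun h => h ▸ phase_mem_phaseGraph hx⟩

theorem continuousOn_phase : ContinuousOn (phase ω) (orbitClosure ω) :=
  continuousOn_of_isClosed_of_forall_mem_iff isClosed_closure fun _ hx _ =>
    hω.mem_phaseGraph_iff hx

theorem phase_shift (hx : x ∈ orbitClosure ω) : phase ω (shift x) = phase ω x + 1 := by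
  refine (hω.mem_phaseGraph_iff (shift_mem_orbitClosure hx)).mp ?_
  refine map_mem_closure (f := Prod.map shift (· + 1))
    (continuous_shift.prodMap (continuous_add_const 1)) (phase_mem_phaseGraph hx) ?_
  rintro _ ⟨m, rfl⟩
  exact ⟨m + 1, by simp [Function.iterate_succ_apply']⟩

theorem image_phase [Finite 𝒜] : phase ω '' orbitClosure ω = univ := by
  have hsnd : Prod.snd '' phaseGraph ω ⊆ phase ω '' orbitClosure ω := by
    rintro _ ⟨⟨x, z⟩, h, rfl⟩
    have hx := fst_mem_orbitClosure_of_mem_phaseGraph h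
    exact ⟨x, hx, (hω.mem_phaseGraph_iff hx).mp h⟩
  refine eq_univ_of_univ_subset (Subset.trans ?_ hsnd)
  rw [← PadicInt.denseRange_natCast.closure_eq]
  refine closure_minimal ?_ (isClosedMap_snd_of_compactSpace _ isClosed_closure)
  rintro _ ⟨m, rfl⟩
  exact ⟨_, subset_closure ⟨m, rfl⟩, rfl⟩

theorem apply_eq_of_phase_eq {y : ℕ → 𝒜} (hx : x ∈ orbitClosure ω)
    (hy : y ∈ orbitClosure ω) (hxy : phase ω x = phase ω y) {n K : ℕ}
    (hn : (n : ZMod (2 ^ K)) + toZModPow K (phase ω x) ≠ hω.hole K) : x n = y n := by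
  rw [hω.apply_eq_of_mem_closure_orbitResidueClass
      (mem_closure_orbitResidueClass_of_mem_phaseGraph (phase_mem_phaseGraph hx) K) hn,
    hω.apply_eq_of_mem_closure_orbitResidueClass
      (mem_closure_orbitResidueClass_of_mem_phaseGraph (phase_mem_phaseGraph hy) K) (hxy ▸ hn),
    hxy]

/-- The points whose `n`-th symbol is not forced by the `2 ^ K`-periodic part of `ω`, for any
`K`. -/
def undeterminedAt (n : ℕ) : Set (ℕ → 𝒜) :=
  {x ∈ orbitClosure ω | ∀ K, (n : ZMod (2 ^ K)) + toZModPow K (phase ω x) = hω.hole K}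

theorem finite_undeterminedAt [Finite 𝒜] (n : ℕ) : (hω.undeterminedAt n).Finite := by
  refine Finite.of_finite_image (f := fun x => x n) (toFinite _) ?_
  rintro x ⟨hx, hxn⟩ y ⟨hy, hyn⟩ (hxy : x n = y n)
  have hph : phase ω x = phase ω y :=
    ext_of_toZModPow.mp fun K => add_left_cancel ((hxn K).trans (hyn K).symm)
  funext i
  rcases eq_or_ne i n with rfl | hin
  · exact hxy
  refine hω.apply_eq_of_phase_eq hx hy hph (K := i + n) fun h => hin ?_
  have hcast : (i : ZMod (2 ^ (i + n))) = n := add_right_cancel (h.trans (hxn _).symm)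
  rwa [ZMod.natCast_eq_natCast_iff', Nat.mod_eq_of_lt, Nat.mod_eq_of_lt] at hcast
  · exact n.lt_two_pow_self.trans_le (Nat.pow_le_pow_right two_pos (by omega))
  · exact i.lt_two_pow_self.trans_le (Nat.pow_le_pow_right two_pos (by omega))

theorem injOn_phase : InjOn (phase ω) (orbitClosure ω \ ⋃ n, hω.undeterminedAt n) := by
  rintro x ⟨hx, hxU⟩ y ⟨hy, -⟩ hxy
  funext n
  by_contra hne
  refine hxU (mem_iUnion.mpr ⟨n, hx, fun K => ?_⟩)
  by_contra hK
  exact hne (hω.apply_eq_of_phase_eq hx hy hxy hK)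

theorem mem_undeterminedAt_succ (hx : x ∈ orbitClosure ω) {n : ℕ}
    (h : shift x ∈ hω.undeterminedAt n) : x ∈ hω.undeterminedAt (n + 1) := by
  refine ⟨hx, fun K => ?_⟩
  rw [← h.2 K, hω.phase_shift hx, map_add, map_one, Nat.cast_succ]
  ring

end IsDyadicToeplitz

end PhaseGraph

end

theorem stmt8_general {𝒜 : Type*} [Fintype 𝒜] [TopologicalSpace 𝒜] [DiscreteTopology 𝒜]
    (ω : ℕ → 𝒜) (hT : IsToeplitz ω)
    (hEP : EP ω = {p : ℕ | ∃ k : ℕ, 1 ≤ k ∧ p = 2 ^ k}) :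
    ∃ (Ω₁ : Set (ℕ → 𝒜)) (f : (ℕ → 𝒜) → ℤ_[2]),
      Ω₁ ⊆ orbitClosure ω ∧
      Ω₁.Countable ∧
      ContinuousOn f (orbitClosure ω) ∧
      f '' orbitClosure ω = Set.univ ∧
      (∀ x ∈ orbitClosure ω, f (shift x) = f x + 1) ∧
      (∀ x ∈ orbitClosure ω \ Ω₁, shift x ∈ orbitClosure ω \ Ω₁) ∧
      Set.InjOn f (orbitClosure ω \ Ω₁) := by
  have hω := hT.isDyadicToeplitz hEP
  refine ⟨⋃ n, hω.undeterminedAt n, phase ω, iUnion_subset fun n => sep_subset _ _,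
    countable_iUnion fun n => (hω.finite_undeterminedAt n).countable, hω.continuousOn_phase,
    hω.image_phase, fun x hx => hω.phase_shift hx, ?_, hω.injOn_phase⟩
  rintro x ⟨hx, hxU⟩
  refine ⟨shift_mem_orbitClosure hx, fun h => hxU ?_⟩
  obtain ⟨n, hn⟩ := mem_iUnion.mp h
  exact mem_iUnion.mpr ⟨n + 1, hω.mem_undeterminedAt_succ hx hn⟩

/-- For a Toeplitz sequence `ω` with `EP(ω) = {2^k : k ≥ 1}`, the subshift
`σ|_{Z(ω,σ)}` is, up to a countable set, continuously conjugated to the binary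
odometer `z ↦ z + 1` on `ℤ₂`. -/
theorem stmt8 {𝒜 : Type*} [Fintype 𝒜] [Nonempty 𝒜] [TopologicalSpace 𝒜] [DiscreteTopology 𝒜]
    (ω : ℕ → 𝒜) (hT : IsToeplitz ω)
    (hEP : EP ω = {p : ℕ | ∃ k : ℕ, 1 ≤ k ∧ p = 2 ^ k}) :
    ∃ (Ω₁ : Set (ℕ → 𝒜)) (f : (ℕ → 𝒜) → ℤ_[2]),
      Ω₁ ⊆ orbitClosure ω ∧
      Ω₁.Countable ∧
      ContinuousOn f (orbitClosure ω) ∧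
      f '' orbitClosure ω = Set.univ ∧
      (∀ x ∈ orbitClosure ω, f (shift x) = f x + 1) ∧
      (∀ x ∈ orbitClosure ω \ Ω₁, shift x ∈ orbitClosure ω \ Ω₁) ∧
      Set.InjOn f (orbitClosure ω \ Ω₁) :=
  stmt8_general ω hT hEP
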